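/- arXiv:2212.02317 — 6 statements merged into one kernel-verified Lean document; each statement's English description precedes it below -/
import Mathlib

section
/- If L₁, …, Lₙ and M₁, …, Mₘ are nonempty languages with L₁···Lₙ = M₁···Mₘ (equality of concatenations), then Min(L₁)···Min(Lₙ) = Min(M₁)···Min(Mₘ). -/
/-- The set of minimum-length words of a language. -/
def MinWords {α : Type*} (L : Language α) : Language α :=
  {w | w ∈ L ∧ ∀ u ∈ L, w.length ≤ u.length}

lemma minWords_one {α : Type*} : MinWords (1 : Language α) = 1 := by
  ext w
  constructor
  · rintro ⟨hw, -⟩; exact hw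
  · rintro hw
    refine ⟨hw, ?_⟩
    intro u hu
    simp only [Language.mem_one] at hw hu
    simp [hw, hu]

lemma minWords_mul {α : Type*} {L P : Language α} (hL : ∃ w, w ∈ L) (hP : ∃ w, w ∈ P) :
    MinWords (L * P) = MinWords L * MinWords P := by
  ext w
  constructor
  · rintro ⟨hw, hmin⟩
    rcases hw with ⟨a, ha, b, hb, rfl⟩
    refine ⟨a, ⟨ha, ?_⟩, b, ⟨hb, ?_⟩, rfl⟩
    · intro u hu
      have := hmin (u ++ b) ⟨u, hu, b, hb, rfl⟩
      simp only [List.length_append] at this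
      omega
    · intro u hu
      have := hmin (a ++ u) ⟨a, ha, u, hu, rfl⟩
      simp only [List.length_append] at this
      omega
  · rintro ⟨a, ⟨ha, hamin⟩, b, ⟨hb, hbmin⟩, rfl⟩
    refine ⟨⟨a, ha, b, hb, rfl⟩, ?_⟩
    rintro u ⟨x, hx, y, hy, rfl⟩
    have h1 := hamin x hx
    have h2 := hbmin y hy
    simp only [List.length_append]
    omega

lemma prod_nonempty {α : Type*} (Ls : List (Language α))
    (hLs : ∀ L ∈ Ls, ∃ w, w ∈ L) : ∃ w, w ∈ Ls.prod := by
  induction Ls with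
  | nil => exact ⟨[], by simp [Language.mem_one]⟩
  | cons L Ls ih =>
    obtain ⟨a, ha⟩ := hLs L (by simp)
    obtain ⟨b, hb⟩ := ih (fun M hM => hLs M (by simp [hM]))
    exact ⟨a ++ b, ⟨a, ha, b, hb, rfl⟩⟩

lemma minWords_prod {α : Type*} (Ls : List (Language α))
    (hLs : ∀ L ∈ Ls, ∃ w, w ∈ L) :
    (Ls.map MinWords).prod = MinWords Ls.prod := by
  induction Ls with
  | nil => simpa using minWords_one.symm
  | cons L Ls ih =>
    simp only [List.map_cons, List.prod_cons]
    rw [ih (fun M hM => hLs M (by simp [hM])),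
      minWords_mul (hLs L (by simp)) (prod_nonempty Ls (fun M hM => hLs M (by simp [hM])))]

/-- If `L₁, …, Lₙ` and `M₁, …, Mₘ` are nonempty languages with
`L₁···Lₙ = M₁···Mₘ`, then `Min(L₁)···Min(Lₙ) = Min(M₁)···Min(Mₘ)`. -/
theorem minWords_prod_eq_of_prod_eq {α : Type*} (Ls Ms : List (Language α))
    (hLs : ∀ L ∈ Ls, ∃ w, w ∈ L) (hMs : ∀ M ∈ Ms, ∃ w, w ∈ M)
    (heq : Ls.prod = Ms.prod) :
    (Ls.map MinWords).prod = (Ms.map MinWords).prod := by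
  rw [minWords_prod Ls hLs, minWords_prod Ms hMs, heq]
end

section
/- A string assignment ν is a solution of the word equation y₁…yₙ = z₁…zₘ if and only if every atom equivalence class agrees in ν, where lengths are fixed by ν (ℓ_x = |ν(x)| for each variable x) and the total lengths of both sides coincide. -/
/-- The atom (variable occurrence, index within it) lying at a given position
of a term: `atomOf ℓ t p = some (x, i)` iff the `p`-th letter (0-based) of any
string matching the term `t` (with variable lengths given by `ℓ`) lies at
index `i` inside an occurrence of variable `x`. -/
def atomOf {X : Type*} (ℓ : X → ℕ) : List X → ℕ → Option (X × ℕ)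
  | [], _ => none
  | x :: xs, p => if p < ℓ x then some (x, p) else atomOf ℓ xs (p - ℓ x)

/-- Two atoms are related if they are the left and right atoms of a common
position of the equation `ys = zs`. The equivalence `∼` on atoms is the
equivalence generated by this relation. -/
def AtomRel {X : Type*} (ℓ : X → ℕ) (ys zs : List X) (a b : X × ℕ) : Prop :=
  ∃ p, atomOf ℓ ys p = some a ∧ atomOf ℓ zs p = some b

/-!
The `p`-th letter of `ν(t₁)⋯ν(tₖ)` is the letter of `ν` at the atom `atomOf ℓ t p`, so `ν` is a
solution iff the left and right atoms of every position carry the same letter. As `AtomRel`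
relates exactly these pairs, this says that the letter map on atoms is constant along `AtomRel`,
hence on its equivalence classes. Equal total lengths make both sides run out of atoms at the
same position.
-/

section Atoms

variable {X : Type*} (ℓ : X → ℕ)

lemma atomOf_lt_of_eq_some : ∀ {t : List X} {p : ℕ} {a : X × ℕ},
    atomOf ℓ t p = some a → a.2 < ℓ a.1
  | [], _, _, h => by simp [atomOf] at h
  | x :: t, p, a, h => by
    unfold atomOf at h
    split_ifs at h with hp
    · cases h
      exact hp
    · exact atomOf_lt_of_eq_some h

lemma atomOf_eq_none_iff : ∀ {t : List X} {p : ℕ}, atomOf ℓ t p = none ↔ (t.map ℓ).sum ≤ p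
  | [], _ => by simp [atomOf]
  | x :: t, p => by
    unfold atomOf
    split_ifs with hp
    · simp only [false_iff, List.map_cons, List.sum_cons, not_le]
      omega
    · rw [atomOf_eq_none_iff, List.map_cons, List.sum_cons]
      omega

lemma getElem?_flatten_map_eq_bind_atomOf {Γ : Type*} (ν : X → List Γ)
    (hlen : ∀ x, (ν x).length = ℓ x) :
    ∀ (t : List X) (p : ℕ),
      (t.map ν).flatten[p]? = (atomOf ℓ t p).bind fun a => (ν a.1)[a.2]?
  | [], _ => by simp [atomOf]
  | x :: t, p => by
    rw [List.map_cons, List.flatten_cons, atomOf]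
    split_ifs with hp
    · rw [List.getElem?_append_left (by rwa [hlen])]
      rfl
    · rw [List.getElem?_append_right (by rw [hlen]; omega), hlen,
        getElem?_flatten_map_eq_bind_atomOf ν hlen t]

end Atoms

/-- A string assignment `ν` (with lengths `ℓ_x = |ν x|` and matching total
lengths) is a solution of the word equation `y₁…yₙ = z₁…zₘ` iff every atom
equivalence class agrees in `ν`, i.e. for every atom all atoms of its
`∼`-class carry one common letter. -/
theorem solution_iff_all_atom_classes_agree {X Γ : Type*}
    (ℓ : X → ℕ) (ys zs : List X) (ν : X → List Γ)
    (hlen : ∀ x, (ν x).length = ℓ x)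
    (htot : (ys.map ℓ).sum = (zs.map ℓ).sum) :
    (ys.map ν).flatten = (zs.map ν).flatten ↔
      ∀ a : X × ℕ, a.2 < ℓ a.1 →
        ∃ c : Γ, ∀ b : X × ℕ, Relation.EqvGen (AtomRel ℓ ys zs) a b →
          (ν b.1)[b.2]? = some c := by
  set letter : X × ℕ → Option Γ := fun a => (ν a.1)[a.2]?
  have hsol : (ys.map ν).flatten = (zs.map ν).flatten ↔
      ∀ p, (atomOf ℓ ys p).bind letter = (atomOf ℓ zs p).bind letter := by
    simp only [List.ext_getElem?_iff, getElem?_flatten_map_eq_bind_atomOf ℓ ν hlen, letter]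
  rw [hsol]
  constructor
  · intro h a ha
    have hrel : ∀ a b, AtomRel ℓ ys zs a b → letter a = letter b := fun a b ⟨p, hya, hzb⟩ => by
      simpa [hya, hzb] using h p
    refine ⟨(ν a.1)[a.2]'(by rwa [hlen]), fun b hab => ?_⟩
    have hlab : letter a = letter b := congrArg (Quot.lift letter hrel) (Quot.eqvGen_sound hab)
    exact hlab.symm.trans (List.getElem?_eq_getElem _)
  · intro h p
    have hnone : atomOf ℓ ys p = none ↔ atomOf ℓ zs p = none := by
      rw [atomOf_eq_none_iff, atomOf_eq_none_iff, htot]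
    rcases hya : atomOf ℓ ys p with _ | a <;> rcases hzb : atomOf ℓ zs p with _ | b
    · rfl
    · simp_all
    · simp_all
    · obtain ⟨c, hc⟩ := h a (atomOf_lt_of_eq_some ℓ hya)
      exact (hc a (.refl a)).trans (hc b (.rel a b ⟨p, hya, hzb⟩)).symm
end

section
/- In a min-length single-equation system where each variable language contains only words of a fixed length, if the system is stable (the concatenated languages of both sides of the equation are equal), then every single atom equivalence class agrees in some assignment, i.e., there exist an assignment ν with ν(x) ∈ Lang(x) for all x and a letter c such that ν(x)[i] = c for all atoms (x,i) in the class. -/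
/-!
Fix a letter `c` read at index `a.2` by some word of `Lang a.1`, and say that a set of indices of
`x` can agree if some word of `Lang x` reads `c` at all of them. Both sides of the equation denote
the same product language, so a set of positions of the equation is read as `c` by one of its words
as soon as each block of the left side can agree on its share, and then each block of the right
side can agree on its share too.

Induct on the size `n` of a set `A` of indices of `v` whose atoms lie in the class. Pulling `A`
across one related pair of atoms, every block other than the one holding the tracked atom receives
fewer than `n` positions, so `A` can agree as soon as its pull-back `D` to that block can, and `D`
is a translate of a subset of `A`. Along a chain from `(v, m)` to `(v, m')` with `m < m'` in `A`,
either `D` shrinks or it is `A` translated down by `m' - m`, which has a smaller sum; a singleton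
is pulled back to `{a.2}` along a chain from `a`.
-/

theorem AtomRel.swap {X : Type*} {ℓ : X → ℕ} {es fs : List X} {y z : X × ℕ}
    (h : AtomRel ℓ es fs y z) : AtomRel ℓ fs es z y :=
  let ⟨p, hy, hz⟩ := h; ⟨p, hz, hy⟩

namespace AtomAgreement

variable {X Γ : Type*} {ℓ : X → ℕ}

theorem atomOf_append_cons_add {L₁ L₂ : List X} {x : X} {i : ℕ} (hi : i < ℓ x) :
    atomOf ℓ (L₁ ++ x :: L₂) ((L₁.map ℓ).sum + i) = some (x, i) := by
  induction L₁ with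
  | nil => simp [atomOf, hi]
  | cons y L₁ ih =>
    simp only [List.cons_append, atomOf, List.map_cons, List.sum_cons]
    rw [if_neg (by omega), show ℓ y + (L₁.map ℓ).sum + i - ℓ y = (L₁.map ℓ).sum + i by omega]
    exact ih

theorem exists_eq_append_cons_of_atomOf_eq_some {L : List X} {p : ℕ} {b : X × ℕ}
    (h : atomOf ℓ L p = some b) :
    ∃ L₁ L₂, L = L₁ ++ b.1 :: L₂ ∧ p = (L₁.map ℓ).sum + b.2 ∧ b.2 < ℓ b.1 := by
  induction L generalizing p with
  | nil => simp [atomOf] at h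
  | cons x xs ih =>
    simp only [atomOf] at h
    split_ifs at h with hp
    · cases h
      exact ⟨[], xs, rfl, by simp, hp⟩
    · obtain ⟨L₁, L₂, rfl, hpL, hb⟩ := ih h
      exact ⟨x :: L₁, L₂, rfl, by simp only [List.map_cons, List.sum_cons]; omega, hb⟩

theorem snd_lt_of_eqvGen {ys zs : List X} {a b : X × ℕ}
    (h : Relation.EqvGen (AtomRel ℓ ys zs) a b) (ha : a.2 < ℓ a.1) : b.2 < ℓ b.1 := by
  suffices ∀ a b, Relation.EqvGen (AtomRel ℓ ys zs) a b → (a.2 < ℓ a.1 ↔ b.2 < ℓ b.1) from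
    (this a b h).mp ha
  intro a b h
  induction h with
  | rel x y hxy =>
    obtain ⟨p, hx, hy⟩ := hxy
    obtain ⟨-, -, -, -, hx⟩ := exists_eq_append_cons_of_atomOf_eq_some hx
    obtain ⟨-, -, -, -, hy⟩ := exists_eq_append_cons_of_atomOf_eq_some hy
    exact iff_of_true hx hy
  | refl => rfl
  | symm _ _ _ ih => exact ih.symm
  | trans _ _ _ _ _ ih₁ ih₂ => exact ih₁.trans ih₂

variable {Lang : X → Language Γ}

theorem length_eq_of_mem_prod (hlen : ∀ x, ∀ w ∈ Lang x, w.length = ℓ x) :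
    ∀ {L : List X} {W : List Γ}, W ∈ (L.map Lang).prod → W.length = (L.map ℓ).sum
  | [], W, h => by simpa [Language.mem_one] using h
  | x :: L, W, h => by
    simp only [List.map_cons, List.prod_cons] at h
    obtain ⟨u, hu, w, hw, rfl⟩ := Language.mem_mul.mp h
    simp [hlen x u hu, length_eq_of_mem_prod hlen hw]

theorem exists_eq_append_of_mem_prod (hlen : ∀ x, ∀ w ∈ Lang x, w.length = ℓ x)
    {L₁ L₂ : List X} {z : X} {W : List Γ} (h : W ∈ ((L₁ ++ z :: L₂).map Lang).prod) :
    ∃ w₁ u w₂, W = w₁ ++ (u ++ w₂) ∧ w₁.length = (L₁.map ℓ).sum ∧ u ∈ Lang z := by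
  simp only [List.map_append, List.prod_append, List.map_cons, List.prod_cons] at h
  obtain ⟨w₁, hw₁, v, hv, rfl⟩ := Language.mem_mul.mp h
  obtain ⟨u, hu, w₂, -, rfl⟩ := Language.mem_mul.mp hv
  exact ⟨w₁, u, w₂, rfl, length_eq_of_mem_prod hlen hw₁, hu⟩

def CanAgree (Lang : X → Language Γ) (c : Γ) (x : X) (S : Set ℕ) : Prop :=
  ∃ u ∈ Lang x, ∀ i ∈ S, u[i]? = some c

variable {c : Γ} {x : X} {S T : Set ℕ}

theorem canAgree_empty (hx : ∃ w, w ∈ Lang x) : CanAgree Lang c x ∅ :=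
  let ⟨w, hw⟩ := hx; ⟨w, hw, by simp⟩

theorem CanAgree.mono (h : CanAgree Lang c x T) (hST : S ⊆ T) : CanAgree Lang c x S :=
  let ⟨u, hu, hT⟩ := h; ⟨u, hu, fun i hi => hT i (hST hi)⟩

theorem CanAgree.lt_of_mem (hlen : ∀ x, ∀ w ∈ Lang x, w.length = ℓ x)
    (h : CanAgree Lang c x S) {i : ℕ} (hi : i ∈ S) : i < ℓ x := by
  obtain ⟨u, hu, hS⟩ := h
  rw [← hlen x u hu]
  exact (List.getElem?_eq_some_iff.mp (hS i hi)).1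

theorem exists_mem_prod_of_forall_canAgree (hlen : ∀ x, ∀ w ∈ Lang x, w.length = ℓ x)
    {L : List X} (P : Set ℕ)
    (h : ∀ L₁ y L₂, L = L₁ ++ y :: L₂ →
      CanAgree Lang c y {i | i < ℓ y ∧ (L₁.map ℓ).sum + i ∈ P}) :
    ∃ W ∈ (L.map Lang).prod, ∀ q ∈ P, q < W.length → W[q]? = some c := by
  induction L generalizing P with
  | nil => exact ⟨[], by simp [Language.mem_one], by simp⟩
  | cons y L ih =>
    obtain ⟨u, hu, huP⟩ := h [] y L rfl
    obtain ⟨W, hW, hWP⟩ := ih ((ℓ y + ·) ⁻¹' P) fun L₁ y' L₂ hL => by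
      simpa [add_assoc] using h (y :: L₁) y' L₂ (by rw [hL]; rfl)
    refine ⟨u ++ W, Language.mem_mul.mpr ⟨u, hu, W, hW, rfl⟩, fun q hq hqW => ?_⟩
    have hul := hlen y u hu
    rcases lt_or_ge q (ℓ y) with hqy | hqy
    · rw [List.getElem?_append_left (by omega)]
      exact huP q ⟨hqy, by simpa using hq⟩
    · rw [List.getElem?_append_right (by omega), hul]
      refine hWP _ (by simpa [Nat.add_sub_cancel' hqy] using hq) ?_
      simp only [List.length_append] at hqW
      omega

theorem canAgree_of_forall_canAgree (hlen : ∀ x, ∀ w ∈ Lang x, w.length = ℓ x)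
    {es fs : List X} (hst : (es.map Lang).prod = (fs.map Lang).prod) (P : Set ℕ)
    (h : ∀ L₁ y L₂, es = L₁ ++ y :: L₂ →
      CanAgree Lang c y {i | i < ℓ y ∧ (L₁.map ℓ).sum + i ∈ P})
    {M₁ M₂ : List X} {z : X} (hfs : fs = M₁ ++ z :: M₂) :
    CanAgree Lang c z {j | j < ℓ z ∧ (M₁.map ℓ).sum + j ∈ P} := by
  obtain ⟨W, hW, hWP⟩ := exists_mem_prod_of_forall_canAgree hlen P h
  rw [hst, hfs] at hW
  obtain ⟨w₁, u, w₂, rfl, hw₁, hu⟩ := exists_eq_append_of_mem_prod hlen hW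
  refine ⟨u, hu, fun j ⟨hj, hjP⟩ => ?_⟩
  have hul := hlen z u hu
  have hW := hWP _ hjP (by simp only [List.length_append]; omega)
  rwa [← hw₁, List.getElem?_append_right (by omega), Nat.add_sub_cancel_left,
    List.getElem?_append_left (by omega)] at hW

/-- The translation taking `s` to `t` maps `D` into `A`. -/
def ShiftsInto (D A : Finset ℕ) (s t : ℕ) : Prop :=
  ∀ i ∈ D, ∃ j ∈ A, i + t = j + s

namespace ShiftsInto

variable {D E A : Finset ℕ} {s t r : ℕ}

theorem refl (A : Finset ℕ) (s : ℕ) : ShiftsInto A A s s :=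
  fun i hi => ⟨i, hi, rfl⟩

theorem trans (hDE : ShiftsInto D E s t) (hEA : ShiftsInto E A t r) : ShiftsInto D A s r := by
  intro i hi
  obtain ⟨j, hj, hij⟩ := hDE i hi
  obtain ⟨k, hk, hjk⟩ := hEA j hj
  exact ⟨k, hk, by omega⟩

theorem card_le (h : ShiftsInto D A s t) : D.card ≤ A.card := by
  refine Finset.card_le_card_of_injOn (fun i => i + t - s) (fun i hi => ?_) fun i₁ _ i₂ _ h₁₂ => ?_
  · obtain ⟨j, hj, hij⟩ := h i hi
    simpa [show i + t - s = j by omega] using hj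
  · obtain ⟨j₁, -, hij₁⟩ := h i₁ ‹_›
    obtain ⟨j₂, -, hij₂⟩ := h i₂ ‹_›
    simp only at h₁₂
    omega

theorem sum_lt (h : ShiftsInto D A s t) (hst : s < t) (hD : D.Nonempty) :
    ∑ i ∈ D, i < ∑ j ∈ A, j := by
  have hmaps : ∀ i ∈ D, i + (t - s) ∈ A := fun i hi => by
    obtain ⟨j, hj, hij⟩ := h i hi
    simpa [show i + (t - s) = j by omega] using hj
  calc ∑ i ∈ D, i < ∑ i ∈ D, (i + (t - s)) := Finset.sum_lt_sum_of_nonempty hD fun i _ => by omega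
    _ = ∑ j ∈ D.map (addRightEmbedding (t - s)), j := by simp
    _ ≤ ∑ j ∈ A, j := Finset.sum_le_sum_of_subset (fun j hj => by
        obtain ⟨i, hi, rfl⟩ := Finset.mem_map.mp hj
        exact hmaps i hi)

end ShiftsInto

theorem exists_pullback_of_atomRel (hlen : ∀ x, ∀ w ∈ Lang x, w.length = ℓ x)
    {es fs : List X} (hst : (es.map Lang).prod = (fs.map Lang).prod)
    {C : X × ℕ → Prop} (hCval : ∀ y, C y → y.2 < ℓ y.1)
    (hC : ∀ y z, AtomRel ℓ es fs y z → C z → C y) {n : ℕ}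
    (hsmall : ∀ y (S : Finset ℕ), S.card < n → (∀ i ∈ S, C (y, i)) → CanAgree Lang c y S)
    {b b' : X × ℕ} (hbb' : AtomRel ℓ es fs b b')
    {A : Finset ℕ} (hA : ∀ j ∈ A, C (b'.1, j)) (hb'A : b'.2 ∈ A) (hAn : A.card ≤ n) :
    ∃ D : Finset ℕ, (∀ i ∈ D, C (b.1, i)) ∧ b.2 ∈ D ∧ ShiftsInto D A b.2 b'.2 ∧
      (CanAgree Lang c b.1 D → CanAgree Lang c b'.1 A) := by
  classical
  obtain ⟨p, hb, hb'⟩ := hbb'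
  obtain ⟨E₁, E₂, hes, hpE, hbℓ⟩ := exists_eq_append_cons_of_atomOf_eq_some hb
  obtain ⟨F₁, F₂, hfs, hpF, -⟩ := exists_eq_append_cons_of_atomOf_eq_some hb'
  set P : Set ℕ := {q | ∃ j ∈ A, (F₁.map ℓ).sum + j = q}
  set part : List X → X → Finset ℕ := fun L₁ y =>
    (Finset.range (ℓ y)).filter fun i => (L₁.map ℓ).sum + i ∈ P
  have mem_part {L₁ y i} : i ∈ part L₁ y ↔ i < ℓ y ∧ (L₁.map ℓ).sum + i ∈ P := by simp [part]
  have part_mem {L₁ y L₂} (hL : es = L₁ ++ y :: L₂) : ∀ i ∈ part L₁ y, C (y, i) := by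
    intro i hi
    obtain ⟨hi, j, hj, hji⟩ := mem_part.1 hi
    refine hC _ _ ⟨(L₁.map ℓ).sum + i, ?_, ?_⟩ (hA j hj)
    · rw [hL]; exact atomOf_append_cons_add hi
    · rw [hfs, ← hji]; exact atomOf_append_cons_add (hCval _ (hA j hj))
  refine ⟨part E₁ b.1, part_mem hes, mem_part.2 ⟨hbℓ, b'.2, hb'A, by omega⟩, fun i hi => ?_,
    fun hD => ?_⟩
  · obtain ⟨-, j, hj, hji⟩ := mem_part.1 hi
    exact ⟨j, hj, by omega⟩
  refine (canAgree_of_forall_canAgree hlen hst P (fun L₁ y L₂ hL => ?_) hfs).mono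
    fun j hj => ⟨hCval _ (hA j hj), j, hj, rfl⟩
  by_cases hp : (L₁.map ℓ).sum ≤ p ∧ p < (L₁.map ℓ).sum + ℓ y
  · -- the block holding position `p` is the block of `b`
    have hpy := atomOf_append_cons_add (L₁ := L₁) (L₂ := L₂)
      (show p - (L₁.map ℓ).sum < ℓ y by omega)
    rw [← hL, Nat.add_sub_cancel' hp.1, hb] at hpy
    obtain ⟨rfl, hb₂⟩ := Prod.ext_iff.1 (Option.some.inj hpy)
    have hoff : (E₁.map ℓ).sum = (L₁.map ℓ).sum := by omega
    exact hD.mono fun i hi => mem_part.2 ⟨hi.1, hoff ▸ hi.2⟩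
  · -- any other block misses position `p`, hence the index `b'.2` of `A`
    have hshift : ShiftsInto (part L₁ y) (A.erase b'.2) (F₁.map ℓ).sum (L₁.map ℓ).sum := by
      intro i hi
      obtain ⟨hiy, j, hj, hji⟩ := mem_part.1 hi
      exact ⟨j, Finset.mem_erase.2 ⟨by omega, hj⟩, by omega⟩
    have hcard : (part L₁ y).card < n :=
      (hshift.card_le.trans_lt (Finset.card_erase_lt_of_mem hb'A)).trans_le hAn
    exact (hsmall y _ hcard (part_mem hL)).mono fun i hi => mem_part.2 hi

theorem exists_pullback_of_eqvGen (hlen : ∀ x, ∀ w ∈ Lang x, w.length = ℓ x)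
    {ys zs : List X} (hst : (ys.map Lang).prod = (zs.map Lang).prod)
    {C : X × ℕ → Prop} (hCval : ∀ y, C y → y.2 < ℓ y.1)
    (hC : ∀ y z, AtomRel ℓ ys zs y z → (C y ↔ C z)) {n : ℕ}
    (hsmall : ∀ y (S : Finset ℕ), S.card < n → (∀ i ∈ S, C (y, i)) → CanAgree Lang c y S)
    {b b' : X × ℕ} (hbb' : Relation.EqvGen (AtomRel ℓ ys zs) b b')
    {A : Finset ℕ} (hA : ∀ j ∈ A, C (b'.1, j)) (hb'A : b'.2 ∈ A) (hAn : A.card ≤ n) :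
    ∃ D : Finset ℕ, (∀ i ∈ D, C (b.1, i)) ∧ b.2 ∈ D ∧ ShiftsInto D A b.2 b'.2 ∧
      (CanAgree Lang c b.1 D → CanAgree Lang c b'.1 A) := by
  rw [← Relation.EqvGen.reflTransGen_symmGen] at hbb'
  induction hbb' using Relation.ReflTransGen.head_induction_on with
  | refl => exact ⟨A, hA, hb'A, .refl A _, id⟩
  | head hbb₁ _ ih =>
    obtain ⟨D₁, hD₁C, hb₁D₁, hD₁A, hD₁imp⟩ := ih
    have hD₁n := hD₁A.card_le.trans hAn
    obtain ⟨D, hDC, hbD, hDD₁, hDimp⟩ := hbb₁.elim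
      (fun h => exists_pullback_of_atomRel hlen hst hCval (fun y z h => (hC y z h).2) hsmall h
        hD₁C hb₁D₁ hD₁n)
      (fun h => exists_pullback_of_atomRel hlen hst.symm hCval (fun y z h => (hC z y h.swap).1)
        hsmall h.swap hD₁C hb₁D₁ hD₁n)
    exact ⟨D, hDC, hbD, hDD₁.trans hD₁A, hD₁imp ∘ hDimp⟩

theorem canAgree_of_forall_eqvGen (hne : ∀ x, ∃ w, w ∈ Lang x)
    (hlen : ∀ x, ∀ w ∈ Lang x, w.length = ℓ x)
    {ys zs : List X} (hst : (ys.map Lang).prod = (zs.map Lang).prod)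
    {a : X × ℕ} (ha : CanAgree Lang c a.1 {a.2}) (v : X) (A : Finset ℕ)
    (hA : ∀ i ∈ A, Relation.EqvGen (AtomRel ℓ ys zs) a (v, i)) :
    CanAgree Lang c v A := by
  have hCval : ∀ y, Relation.EqvGen (AtomRel ℓ ys zs) a y → y.2 < ℓ y.1 :=
    fun y hy => snd_lt_of_eqvGen hy (ha.lt_of_mem hlen rfl)
  have hC : ∀ y z, AtomRel ℓ ys zs y z →
      (Relation.EqvGen (AtomRel ℓ ys zs) a y ↔ Relation.EqvGen (AtomRel ℓ ys zs) a z) :=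
    fun y z h => ⟨fun hy => .trans _ _ _ hy (.rel _ _ h),
      fun hz => .trans _ _ _ hz (.symm _ _ (.rel _ _ h))⟩
  have hsmall : ∀ y (S : Finset ℕ), S.card < A.card →
      (∀ i ∈ S, Relation.EqvGen (AtomRel ℓ ys zs) a (y, i)) → CanAgree Lang c y S :=
    fun y S _ hS => canAgree_of_forall_eqvGen hne hlen hst ha y S hS
  rcases lt_or_ge 1 A.card with hA₂ | hA₁
  · obtain ⟨m, hm, m', hm', hmm'⟩ := Finset.one_lt_card.mp hA₂
    wlog hlt : m < m' generalizing m m'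
    · exact this m' hm' m hm hmm'.symm (by omega)
    obtain ⟨D, hDC, hmD, hDA, hDA'⟩ := exists_pullback_of_eqvGen hlen hst hCval hC hsmall
      (.trans _ _ _ (.symm _ _ (hA m hm)) (hA m' hm')) hA hm' le_rfl
    refine hDA' ?_
    rcases hDA.card_le.lt_or_eq with hcard | hcard
    · exact hsmall v D hcard hDC
    · have hsum : ∑ i ∈ D, i < ∑ i ∈ A, i := hDA.sum_lt hlt ⟨m, hmD⟩
      exact canAgree_of_forall_eqvGen hne hlen hst ha v D hDC
  · rcases A.eq_empty_or_nonempty with rfl | ⟨m, hm⟩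
    · simpa using canAgree_empty (c := c) (hne v)
    obtain ⟨D, -, -, hDA, hDA'⟩ := exists_pullback_of_eqvGen hlen hst hCval hC hsmall
      (hA m hm) hA hm le_rfl
    refine hDA' (ha.mono fun i hi => ?_)
    obtain ⟨j, hj, hij⟩ := hDA i hi
    have hjm := Finset.card_le_one.mp hA₁ j hj m hm
    simp only [Set.mem_singleton_iff]
    omega
termination_by (A.card, ∑ i ∈ A, i)
decreasing_by all_goals rw [Prod.lex_def]; omega

end AtomAgreement

theorem atom_class_agrees_of_stable_general {X Γ : Type*}
    (ℓ : X → ℕ) (ys zs : List X) (Lang : X → Language Γ)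
    (hne : ∀ x, ∃ w, w ∈ Lang x)
    (hlen : ∀ x, ∀ w ∈ Lang x, w.length = ℓ x)
    (hstable : (ys.map Lang).prod = (zs.map Lang).prod) :
    ∀ a : X × ℕ, a.2 < ℓ a.1 →
      ∃ (ν : X → List Γ) (c : Γ), (∀ x, ν x ∈ Lang x) ∧
        ∀ b : X × ℕ, Relation.EqvGen (AtomRel ℓ ys zs) a b →
          (ν b.1)[b.2]? = some c := by
  classical
  intro a ha
  obtain ⟨w, hw⟩ := hne a.1
  have haw : a.2 < w.length := hlen a.1 w hw ▸ ha
  have hc : AtomAgreement.CanAgree Lang w[a.2] a.1 {a.2} := ⟨w, hw, by simp [haw]⟩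
  have hclass (v : X) :
      AtomAgreement.CanAgree Lang w[a.2] v {i | Relation.EqvGen (AtomRel ℓ ys zs) a (v, i)} := by
    refine (AtomAgreement.canAgree_of_forall_eqvGen hne hlen hstable hc v
      ((Finset.range (ℓ v)).filter fun i => Relation.EqvGen (AtomRel ℓ ys zs) a (v, i))
      (by simp)).mono fun i hi => ?_
    simpa using ⟨AtomAgreement.snd_lt_of_eqvGen hi ha, hi⟩
  choose ν hν hνc using hclass
  exact ⟨ν, w[a.2], hν, fun b hb => hνc b.1 b.2 hb⟩

/-- In a min-length single-equation system (each `Lang x` nonempty with all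
words of the fixed length `ℓ x`), if the system is stable
(`Lang(y₁)···Lang(yₙ) = Lang(z₁)···Lang(zₘ)`), then every single atom
equivalence class agrees in some assignment: there are `ν` with
`ν x ∈ Lang x` for all `x` and a letter `c` such that `ν(x)[i] = c` for all
atoms `(x,i)` of the class. -/
theorem atom_class_agrees_of_stable {X Γ : Type*}
    (ℓ : X → ℕ) (ys zs : List X) (Lang : X → Language Γ)
    (hne : ∀ x, ∃ w, w ∈ Lang x)
    (hlen : ∀ x, ∀ w ∈ Lang x, w.length = ℓ x)
    (htot : (ys.map ℓ).sum = (zs.map ℓ).sum)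
    (hstable : (ys.map Lang).prod = (zs.map Lang).prod) :
    ∀ a : X × ℕ, a.2 < ℓ a.1 →
      ∃ (ν : X → List Γ) (c : Γ), (∀ x, ν x ∈ Lang x) ∧
        ∀ b : X × ℕ, Relation.EqvGen (AtomRel ℓ ys zs) a b →
          (ν b.1)[b.2]? = some c :=
  atom_class_agrees_of_stable_general ℓ ys zs Lang hne hlen hstable
end

section
/- Let y₁…yₙ = z₁…zₘ be a word equation and Lang a feasible language assignment (each Lang(x) nonempty) in which all words of Lang(x) have the same length ℓ_x. If Lang(y₁)···Lang(yₙ) = Lang(z₁)···Lang(zₘ), then the equation has a solution ν with ν(x) ∈ Lang(x) for every variable x. -/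
/-!
Well-order the alphabet and give every variable its lexicographically least admissible word.
Because all words of `Lang x` have the same length, comparing two words of
`Lang x₁ ⋯ Lang xₖ` lexicographically compares their `Lang x₁`-prefixes first, so the least word
of a product of fixed-length languages is the concatenation of the least words of the factors.
Both sides of the equation are therefore the least word of the same language.
-/

namespace List

theorem Lex.append_of_length_eq {α : Type*} {r : α → α → Prop} {u u' : List α}
    (h : Lex r u u') (hlen : u.length = u'.length) (v v' : List α) :
    Lex r (u ++ v) (u' ++ v') := by
  induction h with
  | nil => simp at hlen
  | cons _ ih => exact .cons (ih (by simpa using hlen))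
  | rel h => exact .rel h

theorem nil_le' {α : Type*} [LinearOrder α] : ∀ l : List α, [] ≤ l
  | [] => le_rfl
  | _ :: _ => le_of_lt Lex.nil

theorem append_le_append_of_length_eq {α : Type*} [LinearOrder α] {u u' v v' : List α}
    (hu : u ≤ u') (hlen : u.length = u'.length) (hv : v ≤ v') : u ++ v ≤ u' ++ v' := by
  rcases hu.lt_or_eq with hlt | rfl
  · exact le_of_lt (Lex.append_of_length_eq hlt hlen v v')
  · rcases hv.lt_or_eq with hlt | rfl
    · exact le_of_lt (Lex.append_left _ hlt u)
    · exact le_rfl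

end List

namespace Language

variable {α : Type*} [LinearOrder α]

theorem exists_isLeast_of_forall_length_eq [WellFoundedLT α] {n : ℕ} {L : Language α}
    (hlen : ∀ w ∈ L, w.length = n) (hne : ∃ w, w ∈ L) : ∃ m, IsLeast L m := by
  induction n generalizing L with
  | zero =>
    obtain ⟨w, hw⟩ := hne
    rw [List.length_eq_zero_iff.mp (hlen w hw)] at hw
    exact ⟨[], hw, fun v _ => List.nil_le' v⟩
  | succ n ih =>
    obtain ⟨w, hw⟩ := hne
    obtain ⟨a₀, ⟨t, ht⟩, ha₀⟩ := wellFounded_lt.has_min {a | ∃ t, a :: t ∈ L} <| by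
      cases w with
      | nil => exact absurd (hlen [] hw) (by simp)
      | cons a t => exact ⟨a, t, hw⟩
    obtain ⟨t₀, ht₀, ht₀_le⟩ := ih (L := {u | a₀ :: u ∈ L})
      (fun u hu => by simpa using hlen _ hu) ⟨t, ht⟩
    refine ⟨a₀ :: t₀, ht₀, fun v hv => ?_⟩
    cases v with
    | nil => exact absurd (hlen [] hv) (by simp)
    | cons a u =>
      rcases (not_lt.mp (ha₀ a ⟨u, hv⟩)).lt_or_eq with hlt | rfl
      · exact le_of_lt (List.Lex.rel hlt)
      · exact List.cons_le_cons _ (ht₀_le hv)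

theorem isLeast_mul_of_forall_length_eq {L₁ L₂ : Language α} {m₁ m₂ : List α} {n : ℕ}
    (hlen : ∀ w ∈ L₁, w.length = n) (h₁ : IsLeast L₁ m₁) (h₂ : IsLeast L₂ m₂) :
    IsLeast (L₁ * L₂) (m₁ ++ m₂) := by
  refine ⟨append_mem_mul h₁.1 h₂.1, ?_⟩
  rintro _ ⟨u, hu, v, hv, rfl⟩
  exact List.append_le_append_of_length_eq (h₁.2 hu) (by rw [hlen _ h₁.1, hlen u hu]) (h₂.2 hv)

theorem isLeast_prod_map_flatten {X : Type*} {ℓ : X → ℕ} {Lang : X → Language α} {ν : X → List α}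
    (hlen : ∀ x, ∀ w ∈ Lang x, w.length = ℓ x) (hν : ∀ x, IsLeast (Lang x) (ν x))
    (xs : List X) : IsLeast (xs.map Lang).prod (xs.map ν).flatten := by
  induction xs with
  | nil => exact ⟨nil_mem_one, fun w hw => by rw [(mem_one w).mp hw]; rfl⟩
  | cons x xs ih => exact isLeast_mul_of_forall_length_eq (hlen x) (hν x) ih

end Language

/-- Let `y₁…yₙ = z₁…zₘ` be a word equation and `Lang` a feasible language
assignment in which all words of `Lang x` have the same length `ℓ x`.
If `Lang(y₁)···Lang(yₙ) = Lang(z₁)···Lang(zₘ)`, then the equation has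
a solution `ν` with `ν x ∈ Lang x` for every variable `x`. -/
theorem solution_of_stable_fixed_lengths {X Γ : Type*}
    (ℓ : X → ℕ) (ys zs : List X) (Lang : X → Language Γ)
    (hne : ∀ x, ∃ w, w ∈ Lang x)
    (hlen : ∀ x, ∀ w ∈ Lang x, w.length = ℓ x)
    (hstable : (ys.map Lang).prod = (zs.map Lang).prod) :
    ∃ ν : X → List Γ, (∀ x, ν x ∈ Lang x) ∧
      (ys.map ν).flatten = (zs.map ν).flatten := by
  obtain ⟨_, _⟩ := exists_wellFoundedLT Γ
  choose ν hν using fun x => Language.exists_isLeast_of_forall_length_eq (hlen x) (hne x)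
  refine ⟨ν, fun x => (hν x).1, ?_⟩
  have hys := Language.isLeast_prod_map_flatten hlen hν ys
  rw [hstable] at hys
  exact hys.unique (Language.isLeast_prod_map_flatten hlen hν zs)
end

section
/- Consider a word equation s = t where every variable occurring in t occurs exactly once in the whole equation s = t (a weak equation). If there exists a feasible language assignment Lang refining the given assignment Lang₀ such that Lang(s) ⊆ Lang(t), then the system s = t ∧ ⋀_x x ∈ Lang₀(x) has a solution; conversely, a solution yields such an assignment. -/
/-!
For a solution `ν`, the singleton assignment `x ↦ {ν x}` works, since the product of singleton
languages is the singleton of the concatenation. Conversely, pick any `w₀ x ∈ Lang x`; the word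
`w₀(s)` lies in `Lang(s) ⊆ Lang(t)`, so it factors as `u₁ ⋯ uₖ` with `uᵢ ∈ Lang(tᵢ)`. Since the
variables of `t` are pairwise distinct and do not occur in `s`, setting `ν tᵢ = uᵢ` and `ν = w₀`
elsewhere gives `ν(s) = w₀(s) = ν(t)`.
-/

namespace Language

variable {Γ : Type*}

theorem mem_list_prod_iff_forall₂ {L : List (Language Γ)} {w : List Γ} :
    w ∈ L.prod ↔ ∃ us : List (List Γ), List.Forall₂ (· ∈ ·) us L ∧ us.flatten = w := by
  induction L generalizing w with
  | nil => simp [mem_one, eq_comm]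
  | cons l L ih =>
    simp only [List.prod_cons, mem_mul, ih, List.forall₂_cons_right_iff]
    constructor
    · rintro ⟨u, hu, _, ⟨us, hus, rfl⟩, rfl⟩
      exact ⟨u :: us, ⟨u, us, hu, hus, rfl⟩, rfl⟩
    · rintro ⟨_, ⟨u, us, hu, hus, rfl⟩, rfl⟩
      exact ⟨u, hu, _, ⟨us, hus, rfl⟩, rfl⟩

theorem list_prod_map_singleton {α : Type*} (l : List α) (f : α → List Γ) :
    (l.map fun a => ({f a} : Language Γ)).prod = {(l.map f).flatten} := by
  induction l with
  | nil => rfl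
  | cons a l ih =>
    ext w
    simp only [List.map_cons, List.prod_cons, ih, List.flatten_cons, mem_mul]
    exact ⟨fun ⟨_, rfl, _, rfl, h⟩ => h.symm, fun h => ⟨_, rfl, _, rfl, h.symm⟩⟩

end Language

theorem List.Nodup.exists_map_eq_of_forall₂ {α β : Type*} [DecidableEq α] {R : α → β → Prop}
    {t : List α} {bs : List β} (ht : t.Nodup) (h : List.Forall₂ R t bs)
    (f₀ : α → β) (hf₀ : ∀ a, R a (f₀ a)) :
    ∃ f : α → β, (∀ a, R a (f a)) ∧ (∀ a ∉ t, f a = f₀ a) ∧ t.map f = bs := by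
  induction h with
  | nil => exact ⟨f₀, hf₀, fun _ _ => rfl, rfl⟩
  | @cons a b t bs hab _ ih =>
    obtain ⟨ha, ht⟩ := List.nodup_cons.mp ht
    obtain ⟨f, hf, hf_out, hf_map⟩ := ih ht
    refine ⟨Function.update f a b, fun x => ?_, fun x hx => ?_, ?_⟩
    · rcases eq_or_ne x a with rfl | hx
      · simpa using hab
      · simpa [hx] using hf x
    · rw [Function.update_of_ne (List.ne_of_not_mem_cons hx),
        hf_out x (List.not_mem_of_not_mem_cons hx)]
    · rw [List.map_cons, Function.update_self, List.map_congr_left fun x hx =>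
        Function.update_of_ne (ne_of_mem_of_not_mem hx ha) b f, hf_map]

theorem List.nodup_of_forall_count_append_eq_one {α : Type*} [DecidableEq α] {s t : List α}
    (h : ∀ x ∈ t, (s ++ t).count x = 1) : t.Nodup := by
  refine List.nodup_iff_count_le_one.2 fun x => ?_
  by_cases hx : x ∈ t
  · have := h x hx
    rw [List.count_append] at this
    omega
  · simp [List.count_eq_zero_of_not_mem hx]

theorem List.not_mem_of_forall_count_append_eq_one {α : Type*} [DecidableEq α] {s t : List α}
    (h : ∀ x ∈ t, (s ++ t).count x = 1) {x : α} (hx : x ∈ s) : x ∉ t := fun hxt => by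
  have := h x hxt
  rw [List.count_append] at this
  have := List.count_pos_iff.2 hx
  have := List.count_pos_iff.2 hxt
  omega

/-- Weak equations: let `s = t` be a word equation where every variable
occurring in `t` occurs exactly once in the whole equation `s = t`.
There is a feasible language assignment `Lang` refining `Lang₀` with
`Lang(s) ⊆ Lang(t)` iff the system `s = t ∧ ⋀_x x ∈ Lang₀(x)` has
a solution. -/
theorem weak_equation_solution_iff {X Γ : Type*} [DecidableEq X]
    (s t : List X) (Lang₀ : X → Language Γ)
    (hweak : ∀ x ∈ t, (s ++ t).count x = 1) :
    (∃ Lang : X → Language Γ,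
        (∀ x, (∃ w, w ∈ Lang x) ∧ ∀ w ∈ Lang x, w ∈ Lang₀ x) ∧
        (s.map Lang).prod ≤ (t.map Lang).prod) ↔
    (∃ ν : X → List Γ, (∀ x, ν x ∈ Lang₀ x) ∧
        (s.map ν).flatten = (t.map ν).flatten) := by
  constructor
  · rintro ⟨Lang, hLang, hsub⟩
    choose w₀ hw₀ using fun x => (hLang x).1
    have hs : (s.map w₀).flatten ∈ (s.map Lang).prod :=
      Language.mem_list_prod_iff_forall₂.2 ⟨s.map w₀, by
        simpa [List.forall₂_map_left_iff, List.forall₂_map_right_iff] using fun x _ => hw₀ x, rfl⟩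
    obtain ⟨us, hus, hflat⟩ := Language.mem_list_prod_iff_forall₂.1 (hsub hs)
    obtain ⟨ν, hν, hν_out, hν_map⟩ :=
      (List.nodup_of_forall_count_append_eq_one hweak).exists_map_eq_of_forall₂
        (R := fun x u => u ∈ Lang x) (List.forall₂_map_left_iff.1 hus.flip) w₀ hw₀
    refine ⟨ν, fun x => (hLang x).2 _ (hν x), ?_⟩
    rw [List.map_congr_left fun x hx =>
      hν_out x (List.not_mem_of_forall_count_append_eq_one hweak hx), hν_map, hflat]
  · rintro ⟨ν, hν, heq⟩
    refine ⟨fun x => {ν x}, fun x => ⟨⟨ν x, rfl⟩, fun w hw => hw ▸ hν x⟩, ?_⟩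
    rw [Language.list_prod_map_singleton, Language.list_prod_map_singleton, heq]
end

section
/- In an inclusion graph G of a system of word equations, two distinct nontrivial strongly connected components have disjoint sets of variables: if C₁ ≠ C₂ are nontrivial SCCs then no variable occurs both in a vertex of C₁ and in a vertex of C₂. -/
/-- The dual of an inclusion vertex `⟨s ⊆ t⟩` is `⟨t ⊆ s⟩`. -/
def dualV {X : Type*} (v : List X × List X) : List X × List X := (v.2, v.1)

/-- Edges of an inclusion graph with vertex set `V` (condition (IG3)): there is
an edge from `⟨s ⊆ t⟩` to `⟨s' ⊆ t'⟩` iff both are vertices and `s` and `t'`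
share a variable. -/
def EdgeV {X : Type*} (V : Set (List X × List X)) (v w : List X × List X) : Prop :=
  v ∈ V ∧ w ∈ V ∧ ∃ x, x ∈ v.1 ∧ x ∈ w.2

/-- A variable has multiple occurrences in right-hand sides of vertices of `V`. -/
def MultiOccRHS {X : Type*} [DecidableEq X] (V : Set (List X × List X)) (x : X) : Prop :=
  (∃ v ∈ V, 2 ≤ v.2.count x) ∨ (∃ v ∈ V, ∃ w ∈ V, v ≠ w ∧ x ∈ v.2 ∧ x ∈ w.2)

/-- A vertex lying on a cycle is in `V`, its dual is in `V`, and it is mutually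
adjacent to its dual. -/
lemma cycle_props {X : Type*} (V : Set (List X × List X))
    (hIG4 : ∀ v ∈ V, Relation.TransGen (EdgeV V) v v → dualV v ∈ V)
    (u : List X × List X) (hcyc : Relation.TransGen (EdgeV V) u u) :
    u ∈ V ∧ dualV u ∈ V ∧
      Relation.ReflTransGen (EdgeV V) u (dualV u) ∧
      Relation.ReflTransGen (EdgeV V) (dualV u) u := by
  obtain ⟨b, hub, hbu⟩ := Relation.TransGen.head'_iff.1 hcyc
  obtain ⟨c, hcc, hcu⟩ := Relation.TransGen.tail'_iff.1 hcyc
  have huV : u ∈ V := hub.1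
  have hdV : dualV u ∈ V := hIG4 u huV hcyc
  obtain ⟨x₁, hx₁, -⟩ := hub.2.2
  obtain ⟨x₂, -, hx₂⟩ := hcu.2.2
  refine ⟨huV, hdV, ?_, ?_⟩
  · exact Relation.ReflTransGen.single ⟨huV, hdV, x₁, hx₁, hx₁⟩
  · exact Relation.ReflTransGen.single ⟨hdV, huV, x₂, hx₂, hx₂⟩

/-- If a variable `x` occurs in `p` and in `q`, and both `p`, `q` and their
duals are in `V` with the dual links available, then `q` is reachable from `p`. -/
lemma bridge {X : Type*} (V : Set (List X × List X)) (x : X)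
    (p q : List X × List X)
    (hp : p ∈ V) (hdp : dualV p ∈ V) (hq : q ∈ V) (hdq : dualV q ∈ V)
    (hp1 : Relation.ReflTransGen (EdgeV V) p (dualV p))
    (hq1 : Relation.ReflTransGen (EdgeV V) (dualV q) q)
    (hxp : x ∈ p.1 ∨ x ∈ p.2) (hxq : x ∈ q.1 ∨ x ∈ q.2) :
    Relation.ReflTransGen (EdgeV V) p q := by
  rcases hxp with hxp | hxp <;> rcases hxq with hxq | hxq
  · exact Relation.ReflTransGen.trans
      (Relation.ReflTransGen.single ⟨hp, hdq, x, hxp, hxq⟩) hq1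
  · exact Relation.ReflTransGen.single ⟨hp, hq, x, hxp, hxq⟩
  · exact hp1.trans (Relation.ReflTransGen.trans
      (Relation.ReflTransGen.single ⟨hdp, hdq, x, hxp, hxq⟩) hq1)
  · exact hp1.trans (Relation.ReflTransGen.single ⟨hdp, hq, x, hxp, hxq⟩)

/-- In an inclusion graph of a system of word equations, two distinct
nontrivial SCCs have disjoint sets of variables: if `v` and `w` lie on cycles
and are not mutually reachable (their SCCs are different), then no variable
occurs both in a vertex of the SCC of `v` and in a vertex of the SCC of `w`. -/
theorem nontrivial_sccs_disjoint_vars {X : Type*} [DecidableEq X]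
    (Eqs V : Set (List X × List X))
    (hIG1 : ∀ e ∈ Eqs, e ∈ V ∨ dualV e ∈ V)
    (hV : ∀ v ∈ V, v ∈ Eqs ∨ dualV v ∈ Eqs)
    (hIG2 : ∀ v ∈ V, (∃ x ∈ v.2, MultiOccRHS V x) → dualV v ∈ V)
    (hIG4 : ∀ v ∈ V, Relation.TransGen (EdgeV V) v v → dualV v ∈ V)
    (v w : List X × List X)
    (hvcyc : Relation.TransGen (EdgeV V) v v)
    (hwcyc : Relation.TransGen (EdgeV V) w w)
    (hdiff : ¬ (Relation.ReflTransGen (EdgeV V) v w ∧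
                Relation.ReflTransGen (EdgeV V) w v))
    (u₁ u₂ : List X × List X)
    (hu₁ : Relation.ReflTransGen (EdgeV V) v u₁ ∧
           Relation.ReflTransGen (EdgeV V) u₁ v)
    (hu₂ : Relation.ReflTransGen (EdgeV V) w u₂ ∧
           Relation.ReflTransGen (EdgeV V) u₂ w) :
    ∀ x : X, ¬ ((x ∈ u₁.1 ∨ x ∈ u₁.2) ∧ (x ∈ u₂.1 ∨ x ∈ u₂.2)) := by
  intro x ⟨hx1, hx2⟩
  have hc1 : Relation.TransGen (EdgeV V) u₁ u₁ :=
    Relation.TransGen.trans_left (Relation.TransGen.trans_right hu₁.2 hvcyc) hu₁.1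
  have hc2 : Relation.TransGen (EdgeV V) u₂ u₂ :=
    Relation.TransGen.trans_left (Relation.TransGen.trans_right hu₂.2 hwcyc) hu₂.1
  obtain ⟨h1V, hd1V, hl1, hl1'⟩ := cycle_props V hIG4 u₁ hc1
  obtain ⟨h2V, hd2V, hl2, hl2'⟩ := cycle_props V hIG4 u₂ hc2
  have h12 : Relation.ReflTransGen (EdgeV V) u₁ u₂ :=
    bridge V x u₁ u₂ h1V hd1V h2V hd2V hl1 hl2' hx1 hx2
  have h21 : Relation.ReflTransGen (EdgeV V) u₂ u₁ :=
    bridge V x u₂ u₁ h2V hd2V h1V hd1V hl2 hl1' hx2 hx1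
  exact hdiff ⟨(hu₁.1.trans h12).trans hu₂.2, (hu₂.1.trans h21).trans hu₁.2⟩
end
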